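/- Let $m(t,\tau)$ be defined by Eq. (8) of the paper: $m(t,\tau) = \frac{a_{rx}}{4\sqrt{\pi(D_X\tau + D_{Tx}t)}\, r_0 \tau} \exp\left(-\frac{a_{rx}^2}{4D_X\tau} - \frac{r_0^2}{4D_{Tx}t}\right) \times \left(-e^{b^2/(4a)}\left(\frac{b}{2a}+a_{rx}\right)\mathrm{erfc}\left(\frac{b}{2\sqrt{a}}\right) + e^{c^2/(4a)}\left(\frac{c}{2a}+a_{rx}\right)\mathrm{erfc}\left(\frac{c}{2\sqrt{a}}\right)\right)$, where $a = \frac{1}{4D_X\tau}+\frac{1}{4D_{Tx}t}$, $b = -\frac{a_{rx}}{2D_X\tau}-\frac{r_0}{2D_{Tx}t}$, $c = -\frac{a_{rx}}{2D_X\tau}+\frac{r_0}{2D_{Tx}t}$. Then $m(t,\tau) = \int_0^\infty h(r,\tau) f_{r(t)}(r)\, dr$, where $h(r,\tau) = \frac{a_{rx}}{\sqrt{4\pi D_X\tau^3}}\left(1-\frac{a_{rx}}{r}\right)\exp\left(-\frac{(r-a_{rx})^2}{4D_X\tau}\right)$ and $f_{r(t)}(r) = \frac{r}{r_0\sqrt{\pi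 D_{Tx}t}}\exp\left(-\frac{r^2+r_0^2}{4D_{Tx}t}\right)\sinh\left(\frac{r_0 r}{2D_{Tx}t}\right)$. -/

import Mathlib

open MeasureTheory Real Set Filter

/-- The complementary error function `erfc(x) = (2/√π) ∫_x^∞ e^{-u²} du`. -/
noncomputable def erfc (x : ℝ) : ℝ := 2 / Real.sqrt π * ∫ u in Ioi x, Real.exp (-u ^ 2)

lemma key_integrable {A : ℝ} (hA : 0 < A) (β C1 C2 : ℝ) :
    Integrable (fun r : ℝ => (C1 * r + C2) * Real.exp (-A * r ^ 2 - β * r)) := by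
  set k := β / (2 * A) with hk
  have hA' : A ≠ 0 := hA.ne'
  have harg : ∀ r : ℝ, -A * r ^ 2 - β * r = β ^ 2 / (4 * A) + -(A * (r + k) ^ 2) := by
    intro r; rw [hk]; field_simp; ring
  set g : ℝ → ℝ := fun u => (C1 * Real.exp (β ^ 2 / (4 * A))) * (u * Real.exp (-A * u ^ 2))
      + ((C2 - C1 * k) * Real.exp (β ^ 2 / (4 * A))) * Real.exp (-A * u ^ 2) with hg
  have hgint : Integrable g := ((integrable_mul_exp_neg_mul_sq hA).const_mul _).add
      ((integrable_exp_neg_mul_sq hA).const_mul _)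
  have := hgint.comp_add_right k
  apply this.congr
  filter_upwards with r
  simp only [hg]
  rw [harg r, Real.exp_add]
  ring

lemma Ie_val {A : ℝ} (hA : 0 < A) (β : ℝ) :
    ∫ r in Ioi (0 : ℝ), Real.exp (-A * r ^ 2 - β * r)
      = Real.exp (β ^ 2 / (4 * A)) * (Real.sqrt π / (2 * Real.sqrt A))
          * erfc (β / (2 * Real.sqrt A)) := by
  have hq : 0 < Real.sqrt A := Real.sqrt_pos.mpr hA
  have hq2 : Real.sqrt A ^ 2 = A := Real.sq_sqrt hA.le
  set q := Real.sqrt A with hqdef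
  set s := β / (2 * q) with hs
  have harg : ∀ r : ℝ, -A * r ^ 2 - β * r = β ^ 2 / (4 * A) + -(q * r + s) ^ 2 := by
    intro r
    rw [hs, ← hq2]
    field_simp
    ring
  calc ∫ r in Ioi (0 : ℝ), Real.exp (-A * r ^ 2 - β * r)
      = ∫ r in Ioi (0 : ℝ), Real.exp (β ^ 2 / (4 * A)) * Real.exp (-(q * r + s) ^ 2) := by
        refine setIntegral_congr_fun measurableSet_Ioi fun r _ => ?_
        rw [← Real.exp_add, ← harg r]
    _ = Real.exp (β ^ 2 / (4 * A)) * ∫ r in Ioi (0 : ℝ), Real.exp (-(q * r + s) ^ 2) :=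
        integral_const_mul _ _
    _ = Real.exp (β ^ 2 / (4 * A)) * (q⁻¹ * ∫ x in Ioi (0 : ℝ), Real.exp (-(x + s) ^ 2)) := by
        rw [integral_comp_mul_left_Ioi (fun x => Real.exp (-(x + s) ^ 2)) 0 hq, mul_zero,
          smul_eq_mul]
    _ = Real.exp (β ^ 2 / (4 * A)) * (q⁻¹ * ∫ y in Ioi s, Real.exp (-y ^ 2)) := by
        have hmp := (measurePreserving_add_right (volume : Measure ℝ) s).setIntegral_preimage_emb
          (measurableEmbedding_addRight s) (fun y => Real.exp (-y ^ 2)) (Ioi s)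
        rw [preimage_add_const_Ioi, sub_self] at hmp
        rw [hmp]
    _ = Real.exp (β ^ 2 / (4 * A)) * (Real.sqrt π / (2 * q)) * erfc s := by
        rw [erfc]
        have hπ : Real.sqrt π ≠ 0 := by
          positivity
        field_simp

lemma Imix_val {A : ℝ} (hA : 0 < A) (β : ℝ) :
    ∫ r in Ioi (0 : ℝ), (r + β / (2 * A)) * Real.exp (-A * r ^ 2 - β * r) = 1 / (2 * A) := by
  set F : ℝ → ℝ := fun r => -(2 * A)⁻¹ * Real.exp (-A * r ^ 2 - β * r) with hF
  have hderiv : ∀ r : ℝ, HasDerivAt F ((r + β / (2 * A)) * Real.exp (-A * r ^ 2 - β * r)) r := by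
    intro r
    have h1 : HasDerivAt (fun r : ℝ => -A * r ^ 2 - β * r) (-A * (2 * r) - β) r := by
      have := ((hasDerivAt_pow 2 r).const_mul (-A)).sub ((hasDerivAt_id r).const_mul β)
      simpa [Pi.sub_def] using this
    have := (h1.exp).const_mul (-(2 * A)⁻¹)
    refine this.congr_deriv ?_
    field_simp [hA.ne']
    ring
  have htends : Tendsto F atTop (nhds 0) := by
    have h1 : Tendsto (fun r : ℝ => -A * r ^ 2 - β * r) atTop atBot := by
      have h2 : Tendsto (fun r : ℝ => A * r + β) atTop atTop :=
        (tendsto_id.const_mul_atTop hA).atTop_add tendsto_const_nhds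
      have h3 : Tendsto (fun r : ℝ => r * (A * r + β)) atTop atTop :=
        Tendsto.atTop_mul_atTop₀ tendsto_id h2
      have : (fun r : ℝ => -A * r ^ 2 - β * r) = fun r => -(r * (A * r + β)) := by
        funext r; ring
      rw [this]
      exact tendsto_neg_atBot_iff.mpr h3
    have := Real.tendsto_exp_atBot.comp h1
    have h4 := this.const_mul (-(2 * A)⁻¹)
    rw [mul_zero] at h4
    refine h4.congr fun r => ?_
    simp only [hF, Function.comp]
  have hint : IntegrableOn (fun r : ℝ => (r + β / (2 * A)) * Real.exp (-A * r ^ 2 - β * r))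
      (Ioi (0 : ℝ)) := by
    have := key_integrable hA β 1 (β / (2 * A))
    refine (this.integrableOn).congr_fun (fun r _ => by ring) measurableSet_Ioi
  have := integral_Ioi_of_hasDerivAt_of_tendsto
    (Continuous.continuousWithinAt (by fun_prop)) (fun x _ => hderiv x) hint htends
  rw [this]
  simp only [hF]
  norm_num

lemma Imain {A : ℝ} (hA : 0 < A) (β arx : ℝ) :
    ∫ r in Ioi (0 : ℝ), (r - arx) * Real.exp (-A * r ^ 2 - β * r)
      = 1 / (2 * A) - (β / (2 * A) + arx) *
          (Real.exp (β ^ 2 / (4 * A)) * (Real.sqrt π / (2 * Real.sqrt A))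
            * erfc (β / (2 * Real.sqrt A))) := by
  have hint1 : IntegrableOn (fun r : ℝ => (r + β / (2 * A)) * Real.exp (-A * r ^ 2 - β * r))
      (Ioi (0 : ℝ)) :=
    ((key_integrable hA β 1 (β / (2 * A))).integrableOn).congr_fun (fun r _ => by ring)
      measurableSet_Ioi
  have hint2 : IntegrableOn (fun r : ℝ => (β / (2 * A) + arx) * Real.exp (-A * r ^ 2 - β * r))
      (Ioi (0 : ℝ)) :=
    ((key_integrable hA β 0 (β / (2 * A) + arx)).integrableOn).congr_fun
      (fun r _ => by ring) measurableSet_Ioi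
  have heq : ∀ r ∈ Ioi (0 : ℝ), (r - arx) * Real.exp (-A * r ^ 2 - β * r)
      = (r + β / (2 * A)) * Real.exp (-A * r ^ 2 - β * r)
        - (β / (2 * A) + arx) * Real.exp (-A * r ^ 2 - β * r) := fun r _ => by ring
  rw [setIntegral_congr_fun measurableSet_Ioi heq, integral_sub hint1 hint2, Imix_val hA β,
    integral_const_mul, Ie_val hA β]

/-- Theorem 1: the mean CIR `m(t,τ) = ∫_0^∞ h(r,τ) f_{r(t)}(r) dr`, with
`h(r,τ) = arx/√(4π DX τ³)(1 - arx/r) e^{-(r-arx)²/(4 DX τ)}` and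
`f_{r(t)}(r) = r/(r0 √(π DT t)) e^{-(r²+r0²)/(4 DT t)} sinh(r0 r/(2 DT t))`,
equals the closed-form expression of Eq. (8). -/
theorem stmt_16 (arx DX DT r0 t τ a b c : ℝ)
    (harx : 0 < arx) (hDX : 0 < DX) (hDT : 0 < DT) (hr0 : 0 < r0)
    (ht : 0 < t) (hτ : 0 < τ)
    (ha : a = 1 / (4 * DX * τ) + 1 / (4 * DT * t))
    (hb : b = -(arx / (2 * DX * τ)) - r0 / (2 * DT * t))
    (hc : c = -(arx / (2 * DX * τ)) + r0 / (2 * DT * t)) :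
    ∫ r in Ioi (0 : ℝ),
        (arx / Real.sqrt (4 * π * DX * τ ^ 3) * (1 - arx / r) *
            Real.exp (-(r - arx) ^ 2 / (4 * DX * τ))) *
          (r / (r0 * Real.sqrt (π * DT * t)) * Real.exp (-(r ^ 2 + r0 ^ 2) / (4 * DT * t)) *
            Real.sinh (r0 * r / (2 * DT * t))) =
      arx / (4 * Real.sqrt (π * (DX * τ + DT * t)) * r0 * τ) *
        Real.exp (-(arx ^ 2) / (4 * DX * τ) - r0 ^ 2 / (4 * DT * t)) *
        (-(Real.exp (b ^ 2 / (4 * a)) * (b / (2 * a) + arx) * erfc (b / (2 * Real.sqrt a))) +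
          Real.exp (c ^ 2 / (4 * a)) * (c / (2 * a) + arx) * erfc (c / (2 * Real.sqrt a))) := by
  have hπ : (0 : ℝ) < π := Real.pi_pos
  have haA : 0 < a := by rw [ha]; positivity
  set s1 : ℝ := Real.sqrt (4 * π * DX * τ ^ 3) with hs1
  set s2 : ℝ := Real.sqrt (π * DT * t) with hs2
  have hs1p : 0 < s1 := Real.sqrt_pos.mpr (by positivity)
  have hs2p : 0 < s2 := Real.sqrt_pos.mpr (by positivity)
  set E : ℝ := -(arx ^ 2) / (4 * DX * τ) - r0 ^ 2 / (4 * DT * t) with hE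
  set K : ℝ := arx / s1 / (r0 * s2) * Real.exp E / 2 with hK
  -- pointwise rewrite of the integrand
  have hpt : ∀ r ∈ Ioi (0 : ℝ),
      (arx / s1 * (1 - arx / r) * Real.exp (-(r - arx) ^ 2 / (4 * DX * τ))) *
        (r / (r0 * s2) * Real.exp (-(r ^ 2 + r0 ^ 2) / (4 * DT * t)) *
          Real.sinh (r0 * r / (2 * DT * t)))
      = K * ((r - arx) * Real.exp (-a * r ^ 2 - b * r))
        - K * ((r - arx) * Real.exp (-a * r ^ 2 - c * r)) := by
    intro r hr
    have hrne : r ≠ 0 := (mem_Ioi.mp hr).ne'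
    have harg1 : -(r - arx) ^ 2 / (4 * DX * τ) + (-(r ^ 2 + r0 ^ 2) / (4 * DT * t))
        + r0 * r / (2 * DT * t) = E + (-a * r ^ 2 - b * r) := by
      rw [ha, hb, hE]; field_simp; ring
    have harg2 : -(r - arx) ^ 2 / (4 * DX * τ) + (-(r ^ 2 + r0 ^ 2) / (4 * DT * t))
        + -(r0 * r / (2 * DT * t)) = E + (-a * r ^ 2 - c * r) := by
      rw [ha, hc, hE]; field_simp; ring
    have hsp1 : Real.exp (-(r - arx) ^ 2 / (4 * DX * τ))
        * Real.exp (-(r ^ 2 + r0 ^ 2) / (4 * DT * t)) * Real.exp (r0 * r / (2 * DT * t))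
        = Real.exp E * Real.exp (-a * r ^ 2 - b * r) := by
      rw [← Real.exp_add, ← Real.exp_add, ← Real.exp_add, harg1]
    have hsp2 : Real.exp (-(r - arx) ^ 2 / (4 * DX * τ))
        * Real.exp (-(r ^ 2 + r0 ^ 2) / (4 * DT * t)) * Real.exp (-(r0 * r / (2 * DT * t)))
        = Real.exp E * Real.exp (-a * r ^ 2 - c * r) := by
      rw [← Real.exp_add, ← Real.exp_add, ← Real.exp_add, harg2]
    have h1m : (1 - arx / r) * r = r - arx := by field_simp
    rw [Real.sinh_eq, hK]
    calc (arx / s1 * (1 - arx / r) * Real.exp (-(r - arx) ^ 2 / (4 * DX * τ))) *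
        (r / (r0 * s2) * Real.exp (-(r ^ 2 + r0 ^ 2) / (4 * DT * t)) *
          ((Real.exp (r0 * r / (2 * DT * t)) - Real.exp (-(r0 * r / (2 * DT * t)))) / 2))
        = arx / s1 / (r0 * s2) / 2 * ((1 - arx / r) * r) *
            (Real.exp (-(r - arx) ^ 2 / (4 * DX * τ))
              * Real.exp (-(r ^ 2 + r0 ^ 2) / (4 * DT * t))
              * Real.exp (r0 * r / (2 * DT * t))
            - Real.exp (-(r - arx) ^ 2 / (4 * DX * τ))
              * Real.exp (-(r ^ 2 + r0 ^ 2) / (4 * DT * t))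
              * Real.exp (-(r0 * r / (2 * DT * t)))) := by ring
      _ = arx / s1 / (r0 * s2) / 2 * (r - arx) *
            (Real.exp E * Real.exp (-a * r ^ 2 - b * r)
              - Real.exp E * Real.exp (-a * r ^ 2 - c * r)) := by rw [hsp1, hsp2, h1m]
      _ = arx / s1 / (r0 * s2) * Real.exp E / 2 * ((r - arx) * Real.exp (-a * r ^ 2 - b * r))
          - arx / s1 / (r0 * s2) * Real.exp E / 2 *
              ((r - arx) * Real.exp (-a * r ^ 2 - c * r)) := by ring
  rw [setIntegral_congr_fun measurableSet_Ioi hpt]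
  have hib : IntegrableOn (fun r : ℝ => K * ((r - arx) * Real.exp (-a * r ^ 2 - b * r)))
      (Ioi (0 : ℝ)) :=
    ((key_integrable haA b K (-(K * arx))).integrableOn).congr_fun (fun r _ => by ring)
      measurableSet_Ioi
  have hic : IntegrableOn (fun r : ℝ => K * ((r - arx) * Real.exp (-a * r ^ 2 - c * r)))
      (Ioi (0 : ℝ)) :=
    ((key_integrable haA c K (-(K * arx))).integrableOn).congr_fun (fun r _ => by ring)
      measurableSet_Ioi
  rw [integral_sub hib hic, integral_const_mul, integral_const_mul, Imain haA b arx,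
    Imain haA c arx]
  -- the sqrt identity
  have hsq : Real.sqrt a * (s1 * s2) = Real.sqrt π * Real.sqrt (π * (DX * τ + DT * t)) * τ := by
    have h2 : Real.sqrt (π * (π * (DX * τ + DT * t)) * τ ^ 2)
        = Real.sqrt π * Real.sqrt (π * (DX * τ + DT * t)) * τ := by
      rw [Real.sqrt_mul (by positivity), Real.sqrt_sq hτ.le,
        Real.sqrt_mul (by positivity : (0:ℝ) ≤ π)]
    rw [hs1, hs2, ← Real.sqrt_mul (by positivity : (0:ℝ) ≤ 4 * π * DX * τ ^ 3),
      ← Real.sqrt_mul haA.le, ← h2]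
    congr 1
    rw [ha]; field_simp; ring
  have hsap : 0 < Real.sqrt a := Real.sqrt_pos.mpr haA
  have hsπ : 0 < Real.sqrt π := Real.sqrt_pos.mpr hπ
  have hsπs : 0 < Real.sqrt (π * (DX * τ + DT * t)) := Real.sqrt_pos.mpr (by positivity)
  have hPQ : arx / s1 / (r0 * s2) / 2 * (Real.sqrt π / (2 * Real.sqrt a))
      = arx / (4 * Real.sqrt (π * (DX * τ + DT * t)) * r0 * τ) := by
    rw [Real.sqrt_mul hπ.le (DX * τ + DT * t)] at hsq ⊢
    field_simp
    linear_combination (-4) * hsq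
  rw [hK]
  linear_combination (Real.exp E *
    (-(Real.exp (b ^ 2 / (4 * a)) * (b / (2 * a) + arx) * erfc (b / (2 * Real.sqrt a))) +
      Real.exp (c ^ 2 / (4 * a)) * (c / (2 * a) + arx) * erfc (c / (2 * Real.sqrt a)))) * hPQ
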